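/- arXiv:1810.12239 — 7 statements merged into one kernel-verified Lean document; each statement's English description precedes it below -/
import Mathlib

section
/- Let β : ℝ → ℝ be continuous and nondecreasing with β(0) = 0, let β̂(r) := ∫_0^r β(s) ds, and suppose there is a constant c_β > 0 with |β(r)| ≤ c_β (1 + β̂(r)) for all r ∈ ℝ. Then there exists a constant c > 0 such that β̂(r) + β̂(-r) ≤ c + e^{c r} for every r ≥ 0. -/
/-!
Put `F(r) := β̂(r) + β̂(-r)`. Then `F(0) = 0` and `F'(r) = β(r) - β(-r) ≤ |β(r)| + |β(-r)|`,
which the growth hypothesis bounds by `c_β F(r) + 2 c_β`. Grönwall's inequality gives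
`F(r) ≤ 2 (e^{c_β r} - 1)`, and `2 (e^x - 1) ≤ e^{2x} - 1` turns this into the claim with
`c = 2 c_β`.
-/

open Real Set

theorem hasDerivAt_integral_add_integral_neg {f : ℝ → ℝ} (hf : Continuous f) (x : ℝ) :
    HasDerivAt (fun u => (∫ s in (0:ℝ)..u, f s) + ∫ s in (0:ℝ)..(-u), f s)
      (f x - f (-x)) x := by
  have hneg : HasDerivAt (fun u => ∫ s in (0:ℝ)..(-u), f s) (f (-x) * (-1)) x :=
    ((hf.integral_hasStrictDerivAt 0 (-x)).hasDerivAt).comp x (hasDerivAt_neg x)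
  have h := (hf.integral_hasStrictDerivAt 0 x).hasDerivAt.add hneg
  rwa [mul_neg_one, ← sub_eq_add_neg] at h

theorem le_mul_exp_sub_one_of_deriv_le {f f' : ℝ → ℝ} {K ε : ℝ} (hK : K ≠ 0)
    (hf : ∀ x, HasDerivAt f (f' x) x) (h0 : f 0 = 0)
    (bound : ∀ x, 0 ≤ x → f' x ≤ K * f x + ε) {r : ℝ} (hr : 0 ≤ r) :
    f r ≤ ε / K * (exp (K * r) - 1) := by
  have h := le_gronwallBound_of_liminf_deriv_right_le (f := f) (f' := f') (δ := 0) (a := 0)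
    (b := r) (fun x _ => (hf x).continuousAt.continuousWithinAt)
    (fun x _ _ hr' => ((hf x).hasDerivWithinAt (s := Ici x)).liminf_right_slope_le hr')
    h0.le (fun x hx => bound x hx.1) r ⟨hr, le_rfl⟩
  simpa [gronwallBound_of_K_ne_0 hK] using h

theorem integral_add_integral_neg_le {f : ℝ → ℝ} (hf : Continuous f) {K : ℝ} (hK : K ≠ 0)
    (hgrow : ∀ r, |f r| ≤ K * (1 + ∫ s in (0:ℝ)..r, f s)) {r : ℝ} (hr : 0 ≤ r) :
    (∫ s in (0:ℝ)..r, f s) + (∫ s in (0:ℝ)..(-r), f s) ≤ 2 * (exp (K * r) - 1) := by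
  have bound : ∀ x : ℝ, 0 ≤ x → f x - f (-x) ≤
      K * ((∫ s in (0:ℝ)..x, f s) + ∫ s in (0:ℝ)..(-x), f s) + 2 * K := fun x _ => by
    have := hgrow x
    have := hgrow (-x)
    linarith [le_abs_self (f x), neg_abs_le (f (-x))]
  have h := le_mul_exp_sub_one_of_deriv_le hK (hasDerivAt_integral_add_integral_neg hf)
    (by simp) bound hr
  rwa [mul_div_cancel_right₀ _ hK] at h

theorem two_mul_exp_sub_one_le (x : ℝ) : 2 * (exp x - 1) ≤ exp (2 * x) - 1 := by
  rw [two_mul x, exp_add]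
  nlinarith [sq_nonneg (exp x - 1)]

theorem stmt_10_general (β : ℝ → ℝ) (hc : Continuous β)
    (cβ : ℝ) (hcβ : 0 < cβ)
    (hgrow : ∀ r : ℝ, |β r| ≤ cβ * (1 + ∫ s in (0:ℝ)..r, β s)) :
    ∃ c > 0, ∀ r : ℝ, 0 ≤ r →
      (∫ s in (0:ℝ)..r, β s) + (∫ s in (0:ℝ)..(-r), β s) ≤ c + Real.exp (c * r) := by
  refine ⟨2 * cβ, by positivity, fun r hr => ?_⟩
  calc (∫ s in (0:ℝ)..r, β s) + (∫ s in (0:ℝ)..(-r), β s)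
      ≤ 2 * (exp (cβ * r) - 1) := integral_add_integral_neg_le hc hcβ.ne' hgrow hr
    _ ≤ exp (2 * (cβ * r)) - 1 := two_mul_exp_sub_one_le _
    _ ≤ 2 * cβ + exp (2 * cβ * r) := by rw [mul_assoc]; linarith

/-- let `β` be continuous, nondecreasing, `β(0) = 0`, `β̂(r) = ∫_0^r β`,
and `|β(r)| ≤ c_β (1 + β̂(r))` for all `r`, with `c_β > 0`. Then there is `c > 0` with
`β̂(r) + β̂(-r) ≤ c + e^{c r}` for every `r ≥ 0`. -/
theorem stmt_10 (β : ℝ → ℝ) (hc : Continuous β) (hm : Monotone β) (h0 : β 0 = 0)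
    (cβ : ℝ) (hcβ : 0 < cβ)
    (hgrow : ∀ r : ℝ, |β r| ≤ cβ * (1 + ∫ s in (0:ℝ)..r, β s)) :
    ∃ c > 0, ∀ r : ℝ, 0 ≤ r →
      (∫ s in (0:ℝ)..r, β s) + (∫ s in (0:ℝ)..(-r), β s) ≤ c + Real.exp (c * r) :=
  stmt_10_general β hc cβ hcβ hgrow
end

section
/- Let κ > 0 and c > 0, and let E : [0, ∞) → [0, ∞) be differentiable with E'(t) ≤ c - κ · ln(E(t) + 1) for all t ≥ 0. Set M := e^{2c/κ} - 1 and T_0 := max(0, (E(0) - M)/c). Then E(t) ≤ M for every t ≥ T_0. -/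
open Set

lemma key_decay (c : ℝ) (E E' : ℝ → ℝ) (a b : ℝ) (hab : a ≤ b)
    (hd : ∀ u ∈ Icc a b, HasDerivAt E (E' u) u)
    (hE' : ∀ u ∈ Ioo a b, E' u ≤ -c) :
    E b ≤ E a - c * (b - a) := by
  have hcont : ContinuousOn (fun u => E u + c * u) (Icc a b) := by
    apply ContinuousOn.add
    · exact fun u hu => ((hd u hu).continuousAt).continuousWithinAt
    · exact (continuous_const.mul continuous_id).continuousOn
  have hd' : ∀ u ∈ Ioo a b, HasDerivAt (fun u => E u + c * u) (E' u + c) u := by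
    intro u hu
    have h2 : HasDerivAt (fun u : ℝ => c * u) c u := by
      simpa using (hasDerivAt_id u).const_mul c
    exact (hd u (Ioo_subset_Icc_self hu)).add h2
  have hanti : AntitoneOn (fun u => E u + c * u) (Icc a b) := by
    apply antitoneOn_of_deriv_nonpos (convex_Icc a b) hcont
    · intro u hu
      rw [interior_Icc] at hu
      exact (hd' u hu).differentiableAt.differentiableWithinAt
    · intro u hu
      rw [interior_Icc] at hu
      rw [(hd' u hu).deriv]
      linarith [hE' u hu]
  have := hanti (left_mem_Icc.mpr hab) (right_mem_Icc.mpr hab) hab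
  simp only at this
  linarith

/-- let `κ, c > 0` and `E : [0,∞) → [0,∞)` differentiable with
`E'(t) ≤ c - κ ln(E(t) + 1)` for `t ≥ 0`. With `M := e^{2c/κ} - 1` and
`T₀ := max(0, (E(0) - M)/c)`, one has `E(t) ≤ M` for every `t ≥ T₀`. -/
theorem stmt_13 (κ c : ℝ) (hκ : 0 < κ) (hc : 0 < c) (E E' : ℝ → ℝ)
    (hEnn : ∀ t : ℝ, 0 ≤ t → 0 ≤ E t)
    (hderiv : ∀ t : ℝ, 0 ≤ t → HasDerivAt E (E' t) t)
    (hineq : ∀ t : ℝ, 0 ≤ t → E' t ≤ c - κ * Real.log (E t + 1)) :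
    ∀ t : ℝ, max 0 ((E 0 - (Real.exp (2 * c / κ) - 1)) / c) ≤ t →
      E t ≤ Real.exp (2 * c / κ) - 1 := by
  set M : ℝ := Real.exp (2 * c / κ) - 1 with hM
  -- derivative bound above the barrier
  have hstep : ∀ u : ℝ, 0 ≤ u → M < E u → E' u ≤ -c := by
    intro u hu hMu
    have h1 : (0:ℝ) < E u + 1 := by linarith [hEnn u hu]
    have hlog : 2 * c / κ ≤ Real.log (E u + 1) := by
      rw [Real.le_log_iff_exp_le h1]
      have h2 : Real.exp (2 * c / κ) - 1 < E u := lt_of_eq_of_lt hM.symm hMu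
      linarith
    have := hineq u hu
    have hk : κ * (2 * c / κ) ≤ κ * Real.log (E u + 1) :=
      mul_le_mul_of_nonneg_left hlog hκ.le
    rw [mul_div_cancel₀ _ hκ.ne'] at hk
    linarith
  -- once below M, stays below M
  have hstay : ∀ t₀ : ℝ, 0 ≤ t₀ → E t₀ ≤ M → ∀ t : ℝ, t₀ ≤ t → E t ≤ M := by
    intro t₀ ht₀ hE₀ t ht
    by_contra hlt
    push_neg at hlt
    set S : Set ℝ := {u ∈ Icc t₀ t | E u ≤ M} with hS
    have hne : S.Nonempty := ⟨t₀, ⟨left_mem_Icc.mpr ht, hE₀⟩⟩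
    have hbdd : BddAbove S := BddAbove.mono (fun u hu => hu.1) (bddAbove_Icc)
    have hclosed : IsClosed S := by
      have hcont : ContinuousOn E (Icc t₀ t) := fun u hu =>
        ((hderiv u (le_trans ht₀ hu.1)).continuousAt).continuousWithinAt
      exact hcont.preimage_isClosed_of_isClosed isClosed_Icc isClosed_Iic
    set s := sSup S with hs
    have hsmem : s ∈ S := hclosed.csSup_mem hne hbdd
    obtain ⟨⟨hst₀, hst⟩, hEs⟩ := hsmem
    have hgt : ∀ u ∈ Ioo s t, M < E u := by
      intro u hu
      by_contra h
      push_neg at h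
      have : u ∈ S := ⟨⟨le_trans hst₀ hu.1.le, hu.2.le⟩, h⟩
      exact absurd (le_csSup hbdd this) (not_le.mpr hu.1)
    have hkey : E t ≤ E s - c * (t - s) :=
      key_decay c E E' s t hst
        (fun u hu => hderiv u (le_trans (le_trans ht₀ hst₀) hu.1))
        (fun u hu => hstep u (le_trans (le_trans ht₀ hst₀) hu.1.le) (hgt u hu))
    nlinarith
  intro t ht
  rcases le_or_gt (E 0) M with h0 | h0
  · exact hstay 0 le_rfl h0 t (le_trans (le_max_left _ _) ht)
  · set T : ℝ := (E 0 - M) / c with hT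
    have hTpos : 0 < T := div_pos (by linarith) hc
    have hTmax : max 0 T = T := max_eq_right hTpos.le
    -- E T ≤ M
    have hET : E T ≤ M := by
      by_contra hETgt
      push_neg at hETgt
      have hgt : ∀ u ∈ Icc (0:ℝ) T, M < E u := by
        intro u hu
        by_contra h
        push_neg at h
        exact absurd (hstay u hu.1 h T hu.2) (not_le.mpr hETgt)
      have hkey : E T ≤ E 0 - c * (T - 0) :=
        key_decay c E E' 0 T hTpos.le
          (fun u hu => hderiv u hu.1)
          (fun u hu => hstep u hu.1.le (hgt u (Ioo_subset_Icc_self hu)))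
      have : c * T = E 0 - M := by
        rw [hT, mul_div_cancel₀ _ hc.ne']
      nlinarith
    have ht' : T ≤ t := by rw [hTmax] at ht; exact ht
    exact hstay T hTpos.le hET t ht'
end

section
/- Let h : ℝ → ℝ be continuous with h(r) = 0 for every r ≤ -1, let S : [0, ∞) → ℝ be any function, and let X : [0, ∞) → ℝ be differentiable with X'(t) = (P S(t) - A) · h(X(t)) for all t ≥ 0, where A, P are real constants. If X(0) < -1, then X(t) = X(0) for every t ≥ 0. -/
/-- if `h` is continuous with `h(r) = 0` for `r ≤ -1`, `S` is arbitrary, and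
`X` is differentiable on `[0,∞)` with `X'(t) = (P S(t) - A) h(X(t))`, then `X(0) < -1`
implies `X(t) = X(0)` for every `t ≥ 0`. -/
theorem stmt_15 (h : ℝ → ℝ) (hcont : Continuous h) (hzero : ∀ r : ℝ, r ≤ -1 → h r = 0)
    (S X : ℝ → ℝ) (A P : ℝ)
    (hX : ∀ t : ℝ, 0 ≤ t → HasDerivAt X ((P * S t - A) * h (X t)) t)
    (h0 : X 0 < -1) :
    ∀ t : ℝ, 0 ≤ t → X t = X 0 := by
  have hXc : ∀ t : ℝ, 0 ≤ t → ContinuousAt X t := fun t ht =>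
    (hX t ht).differentiableAt.continuousAt
  -- Step 1: X stays ≤ -1 on [0, ∞)
  have key : ∀ t : ℝ, 0 ≤ t → X t ≤ -1 := by
    by_contra hcon
    push_neg at hcon
    obtain ⟨t0, ht0, ht0'⟩ := hcon
    set B : Set ℝ := {t | t ∈ Set.Icc (0 : ℝ) t0 ∧ -1 ≤ X t} with hBdef
    have hBne : B.Nonempty := ⟨t0, ⟨ht0, le_rfl⟩, ht0'.le⟩
    have hBbdd : BddBelow B := ⟨0, fun x hx => hx.1.1⟩
    set s := sInf B with hs
    have hs0 : 0 ≤ s := le_csInf hBne fun x hx => hx.1.1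
    have hst0 : s ≤ t0 := csInf_le hBbdd ⟨⟨ht0, le_rfl⟩, ht0'.le⟩
    -- X s ≥ -1
    have hXs : -1 ≤ X s := by
      by_contra hXs
      push_neg at hXs
      have hct := hXc s hs0
      have hev : ∀ᶠ u in nhds s, X u < -1 := hct.eventually_lt continuousAt_const hXs
      obtain ⟨ε, hε, hball⟩ := Metric.eventually_nhds_iff.mp hev
      obtain ⟨b, hbB, hbb⟩ := exists_lt_of_csInf_lt hBne (by linarith : sInf B < s + ε)
      have hsb : s ≤ b := csInf_le hBbdd hbB
      have : X b < -1 := hball (by rw [Real.dist_eq, abs_lt]; constructor <;> linarith)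
      linarith [hbB.2]
    have hspos : 0 < s := by
      rcases lt_or_eq_of_le hs0 with h' | h'
      · exact h'
      · exfalso; rw [← h'] at hXs; linarith
    -- X u < -1 for u ∈ [0, s)
    have hlt : ∀ u ∈ Set.Ico (0 : ℝ) s, X u ≤ -1 := by
      intro u hu
      by_contra hXu
      push_neg at hXu
      have : u ∈ B := ⟨⟨hu.1, le_trans hu.2.le hst0⟩, hXu.le⟩
      exact absurd (csInf_le hBbdd this) (not_le.mpr hu.2)
    -- X constant on [0, s]
    have hconst := constant_of_has_deriv_right_zero
      (f := X) (a := (0 : ℝ)) (b := s)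
      (fun u hu => (hXc u hu.1).continuousWithinAt)
      (fun u hu => by
        have := hX u hu.1
        rw [hzero (X u) (hlt u hu), mul_zero] at this
        exact this.hasDerivWithinAt)
    have := hconst s ⟨hs0, le_rfl⟩
    linarith
  -- Step 2: derivative is zero everywhere, so X is constant
  intro t ht
  have hconst := constant_of_has_deriv_right_zero
    (f := X) (a := (0 : ℝ)) (b := t)
    (fun u hu => (hXc u hu.1).continuousWithinAt)
    (fun u hu => by
      have := hX u hu.1
      rw [hzero (X u) (key u hu.1), mul_zero] at this
      exact this.hasDerivWithinAt)
  exact hconst t ⟨ht, le_rfl⟩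
end

section
/- Suppose h_* > 0 and C h_* ≥ B, and suppose h(r) = -h_* for every r ≤ φ_*. Let (X, S) be a differentiable solution on [0, ∞) of the spatially homogeneous system with X(0) ≤ φ_* and S(0) > A/P. Then for every t ≥ 0 one has X(t) ≤ X(0), X is nonincreasing on [0, ∞), and S(t) ≥ S(0) + B σ_s · t (so S(t) → ∞ as t → ∞). -/
open Set Filter Topology

/-- for the spatially homogeneous system
`X' = (P S - A) h(X)`, `S' = -C S h(X) - B (S - σ_s)`, with `h_* > 0`, `C h_* ≥ B`,
`h ≡ -h_*` on `(-∞, φ_*]`, `X(0) ≤ φ_*` and `S(0) > A/P`: for all `t ≥ 0`,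
`X(t) ≤ X(0)`, `X` is nonincreasing on `[0,∞)`, and `S(t) ≥ S(0) + B σ_s t`
(so `S(t) → ∞` as `t → ∞`). -/
theorem stmt_16 (A B C P σs hstar φstar : ℝ)
    (hA : 0 < A) (hB : 0 < B) (hC : 0 < C) (hP : 0 < P) (hσ : 0 < σs)
    (hφ : φstar ≤ -1)
    (h : ℝ → ℝ) (hcont : Continuous h) (hmono : Monotone h)
    (hm1 : h (-1) = 0) (hone : ∀ r : ℝ, 1 ≤ r → h r = 1)
    (hlow : ∀ r : ℝ, r ≤ φstar → h r = -hstar)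
    (hpos : 0 < hstar) (hCB : B ≤ C * hstar)
    (X S : ℝ → ℝ)
    (hXd : ∀ t : ℝ, 0 ≤ t → HasDerivAt X ((P * S t - A) * h (X t)) t)
    (hSd : ∀ t : ℝ, 0 ≤ t → HasDerivAt S (-C * S t * h (X t) - B * (S t - σs)) t)
    (hX0 : X 0 ≤ φstar) (hS0 : A / P < S 0) :
    (∀ t : ℝ, 0 ≤ t → X t ≤ X 0) ∧
    AntitoneOn X (Set.Ici 0) ∧
    (∀ t : ℝ, 0 ≤ t → S 0 + B * σs * t ≤ S t) ∧
    Filter.Tendsto S Filter.atTop Filter.atTop := by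
  have hPS0 : A < P * S 0 := by
    rw [div_lt_iff₀ hP] at hS0; nlinarith
  have hXc : ∀ t : ℝ, 0 ≤ t → ContinuousAt X t := fun t ht => (hXd t ht).continuousAt
  have hSc : ∀ t : ℝ, 0 ≤ t → ContinuousAt S t := fun t ht => (hSd t ht).continuousAt
  -- invariance: X stays ≤ φstar and S stays ≥ S 0
  have key : ∀ t : ℝ, 0 ≤ t → X t ≤ φstar ∧ S 0 ≤ S t := by
    intro b hb
    set s : Set ℝ := {t | X t ≤ φstar ∧ S 0 ≤ S t} with hsdef
    have hsub : Icc (0:ℝ) b ⊆ s := by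
      apply IsClosed.Icc_subset_of_forall_exists_gt
      · -- closedness
        have hXco : ContinuousOn X (Icc (0:ℝ) b) :=
          fun t ht => (hXc t ht.1).continuousWithinAt
        have hSco : ContinuousOn S (Icc (0:ℝ) b) :=
          fun t ht => (hSc t ht.1).continuousWithinAt
        have heq : s ∩ Icc 0 b =
            (Icc (0:ℝ) b ∩ X ⁻¹' Iic φstar) ∩ (Icc (0:ℝ) b ∩ S ⁻¹' Ici (S 0)) := by
          ext t
          simp only [hsdef, mem_inter_iff, mem_setOf_eq, mem_preimage, mem_Iic, mem_Ici]
          tauto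
        rw [heq]
        exact (hXco.preimage_isClosed_of_isClosed isClosed_Icc isClosed_Iic).inter
          (hSco.preimage_isClosed_of_isClosed isClosed_Icc isClosed_Ici)
      · exact ⟨hX0, le_refl _⟩
      · rintro x ⟨⟨hXx, hSx⟩, hx0, hxb⟩ y hy
        have hhx : h (X x) = -hstar := hlow _ hXx
        have hXder := hXd x hx0
        have hSder := hSd x hx0
        rw [hhx] at hXder hSder
        have hXslope := hasDerivAt_iff_tendsto_slope.1 hXder
        have hSslope := hasDerivAt_iff_tendsto_slope.1 hSder
        have hSx0 : 0 < S x := by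
          have : 0 < A / P := div_pos hA hP
          linarith
        have hXneg : (P * S x - A) * -hstar < 0 := by
          have hPSx : A < P * S x := by nlinarith
          nlinarith
        have hSpos : 0 < -C * S x * -hstar - B * (S x - σs) := by nlinarith
        have e1 : ∀ᶠ t in 𝓝[≠] x, slope X x t < 0 :=
          hXslope.eventually (Iio_mem_nhds hXneg)
        have e2 : ∀ᶠ t in 𝓝[≠] x, 0 < slope S x t :=
          hSslope.eventually (Ioi_mem_nhds hSpos)
        have hmono' : 𝓝[>] x ≤ 𝓝[≠] x :=
          nhdsWithin_mono x (fun t ht => ne_of_gt ht)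
        have e3 : Ioc x y ∈ 𝓝[>] x := Ioc_mem_nhdsGT_of_mem ⟨le_refl x, hy⟩
        have e4 : ∀ᶠ t in 𝓝[>] x,
            slope X x t < 0 ∧ 0 < slope S x t ∧ t ∈ Ioc x y :=
          (e1.filter_mono hmono').and ((e2.filter_mono hmono').and (eventually_of_mem e3 (fun t ht => ht)))
        obtain ⟨t, h1, h2, h3⟩ := e4.exists
        refine ⟨t, ?_, h3⟩
        have htx : 0 < t - x := by have := h3.1; linarith
        have hXt : X t ≤ φstar := by
          rw [slope_def_field] at h1
          rcases div_neg_iff.mp h1 with ⟨_, hc⟩ | ⟨hc, _⟩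
          · linarith
          · linarith
        have hSt : S 0 ≤ S t := by
          rw [slope_def_field] at h2
          rcases div_pos_iff.mp h2 with ⟨hc, _⟩ | ⟨_, hc⟩
          · linarith
          · linarith
        exact ⟨hXt, hSt⟩
    exact hsub ⟨hb, le_refl b⟩
  -- facts for every t ≥ 0
  have hSlb : ∀ t : ℝ, 0 ≤ t → A / P < S t := fun t ht =>
    lt_of_lt_of_le hS0 (key t ht).2
  have hh : ∀ t : ℝ, 0 ≤ t → h (X t) = -hstar := fun t ht => hlow _ (key t ht).1
  -- X is antitone on Ici 0
  have hanti : AntitoneOn X (Ici 0) := by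
    apply antitoneOn_of_deriv_nonpos (convex_Ici 0)
    · exact fun t ht => (hXc t ht).continuousWithinAt
    · intro t ht
      rw [interior_Ici] at ht
      exact ((hXd t (le_of_lt ht)).differentiableAt).differentiableWithinAt
    · intro t ht
      rw [interior_Ici] at ht
      have ht' : (0:ℝ) ≤ t := le_of_lt ht
      rw [(hXd t ht').deriv, hh t ht']
      have : A < P * S t := by
        have := hSlb t ht'
        rw [div_lt_iff₀ hP] at this; nlinarith
      nlinarith
  -- lower bound for S
  have hSg : ∀ t : ℝ, 0 ≤ t → S 0 + B * σs * t ≤ S t := by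
    have hmonog : MonotoneOn (fun t => S t - B * σs * t) (Ici 0) := by
      apply monotoneOn_of_deriv_nonneg (convex_Ici 0)
      · exact ContinuousOn.sub (fun t ht => (hSc t ht).continuousWithinAt)
          (Continuous.continuousOn (by continuity))
      · intro t ht
        rw [interior_Ici] at ht
        exact (((hSd t (le_of_lt ht)).sub
          ((hasDerivAt_id t).const_mul (B * σs))).differentiableAt).differentiableWithinAt
      · intro t ht
        rw [interior_Ici] at ht
        have ht' : (0:ℝ) ≤ t := le_of_lt ht
        have hd : HasDerivAt (fun t => S t - B * σs * t)
            ((-C * S t * h (X t) - B * (S t - σs)) - B * σs * 1) t :=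
          (hSd t ht').sub ((hasDerivAt_id t).const_mul (B * σs))
        rw [hd.deriv, hh t ht']
        have hStpos : 0 < S t := lt_trans (div_pos hA hP) (hSlb t ht')
        nlinarith
    intro t ht
    have := hmonog (self_mem_Ici) (ht : t ∈ Ici (0:ℝ)) ht
    simp only [mul_zero, sub_zero] at this
    linarith
  refine ⟨fun t ht => hanti self_mem_Ici ht ht, hanti, hSg, ?_⟩
  -- divergence of S
  have hlin : Tendsto (fun t : ℝ => S 0 + B * σs * t) atTop atTop :=
    tendsto_atTop_add_const_left atTop (S 0)
      (Tendsto.const_mul_atTop (by positivity) tendsto_id)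
  exact tendsto_atTop_mono' atTop
    ((eventually_ge_atTop (0:ℝ)).mono (fun t ht => hSg t ht)) hlin
end

section
/- Suppose B - C h_* > 0 and -h_* ≤ h(r) ≤ 1 for all r ∈ ℝ. Let (X, S) be a differentiable solution on [0, ∞) of the spatially homogeneous system, and suppose S(0) ∈ [B σ_s/(B + C), B σ_s/(B - C h_*)]. Then S(t) ∈ [B σ_s/(B + C), B σ_s/(B - C h_*)] for every t ≥ 0; that is, the strip 𝒮 = { (X, S) : B σ_s/(B + C) ≤ S ≤ B σ_s/(B - C h_*) } is positively invariant. -/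
/-- for the spatially homogeneous system, if `B - C h_* > 0` and
`-h_* ≤ h ≤ 1`, then the strip `𝒮 = {(X,S) : B σ_s/(B+C) ≤ S ≤ B σ_s/(B - C h_*)}`
is positively invariant: `S(0)` in the strip implies `S(t)` in the strip for all `t ≥ 0`. -/
theorem stmt_17 (A B C P σs hstar φstar : ℝ)
    (hA : 0 < A) (hB : 0 < B) (hC : 0 < C) (hP : 0 < P) (hσ : 0 < σs)
    (hstar_nn : 0 ≤ hstar) (hφ : φstar ≤ -1)
    (h : ℝ → ℝ) (hcont : Continuous h) (hmono : Monotone h)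
    (hm1 : h (-1) = 0) (hone : ∀ r : ℝ, 1 ≤ r → h r = 1)
    (hlow : ∀ r : ℝ, r ≤ φstar → h r = -hstar)
    (hBC : 0 < B - C * hstar)
    (hbound : ∀ r : ℝ, -hstar ≤ h r ∧ h r ≤ 1)
    (X S : ℝ → ℝ)
    (hXd : ∀ t : ℝ, 0 ≤ t → HasDerivAt X ((P * S t - A) * h (X t)) t)
    (hSd : ∀ t : ℝ, 0 ≤ t → HasDerivAt S (-C * S t * h (X t) - B * (S t - σs)) t)
    (hS0 : S 0 ∈ Set.Icc (B * σs / (B + C)) (B * σs / (B - C * hstar))) :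
    ∀ t : ℝ, 0 ≤ t → S t ∈ Set.Icc (B * σs / (B + C)) (B * σs / (B - C * hstar)) := by
  intro t ht
  set L := B * σs / (B + C) with hLdef
  set U := B * σs / (B - C * hstar) with hUdef
  have hBCpos : (0:ℝ) < B + C := by positivity
  have hLeq : (B + C) * L = B * σs := by
    rw [hLdef]; field_simp
  have hUeq : (B - C * hstar) * U = B * σs := by
    rw [hUdef]; field_simp
  have hUpos : 0 < U := div_pos (by positivity) hBC
  have hScont : ContinuousOn S (Set.Icc 0 t) := fun x hx =>
    (hSd x hx.1).continuousAt.continuousWithinAt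
  have hmem : t ∈ Set.Icc (0:ℝ) t := Set.mem_Icc.2 ⟨ht, le_refl t⟩
  constructor
  · -- lower bound
    have key : ∀ ε : ℝ, 0 < ε → L - S t ≤ 0 + ε := by
      intro ε hε
      have := image_le_of_deriv_right_lt_deriv_boundary
        (f := fun s => L - S s)
        (f' := fun s => -(-C * S s * h (X s) - B * (S s - σs)))
        (a := 0) (b := t) (B := fun _ => ε) (B' := fun _ => 0)
        (continuousOn_const.sub hScont)
        (fun x hx => ((hSd x hx.1).const_sub L).hasDerivWithinAt)
        (by have := hS0.1; show L - S 0 ≤ ε; linarith)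
        (fun x => hasDerivAt_const x ε)
        ?_ hmem
      · simpa using this
      · intro x hx heq
        have heq' : L - S x = ε := heq
        have hSx : S x = L - ε := by linarith
        have hb := hbound (X x)
        have hd : (0:ℝ) < -C * S x * h (X x) - B * (S x - σs) := by
          rcases le_or_gt (S x) 0 with hsle | hsgt
          · nlinarith [mul_nonneg (neg_nonneg.2 hsle) (by linarith [hb.1] : (0:ℝ) ≤ h (X x) + hstar),
              mul_nonneg (neg_nonneg.2 hsle) hBC.le, hC.le, mul_pos hB hσ]
          · nlinarith [mul_nonneg hsgt.le (by linarith [hb.2] : (0:ℝ) ≤ 1 - h (X x)),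
              hLeq, mul_pos hBCpos hε, hC.le]
        show -(-C * S x * h (X x) - B * (S x - σs)) < 0
        linarith
    have : L - S t ≤ 0 := le_of_forall_pos_le_add key
    linarith
  · -- upper bound
    have key : ∀ ε : ℝ, 0 < ε → S t - U ≤ 0 + ε := by
      intro ε hε
      have := image_le_of_deriv_right_lt_deriv_boundary
        (f := fun s => S s - U)
        (f' := fun s => -C * S s * h (X s) - B * (S s - σs))
        (a := 0) (b := t) (B := fun _ => ε) (B' := fun _ => 0)
        (hScont.sub continuousOn_const)
        (fun x hx => ((hSd x hx.1).sub_const U).hasDerivWithinAt)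
        (by have := hS0.2; show S 0 - U ≤ ε; linarith)
        (fun x => hasDerivAt_const x ε)
        ?_ hmem
      · simpa using this
      · intro x hx heq
        have heq' : S x - U = ε := heq
        have hSx : S x = U + ε := by linarith
        have hb := hbound (X x)
        have hSpos : 0 < S x := by linarith
        show -C * S x * h (X x) - B * (S x - σs) < 0
        nlinarith [mul_nonneg hSpos.le (by linarith [hb.1] : (0:ℝ) ≤ h (X x) + hstar),
          hUeq, mul_pos hBC hε, hC.le]
    have : S t - U ≤ 0 := le_of_forall_pos_le_add key
    linarith
end

section
/- Suppose B - C h_* > 0, -h_* ≤ h(r) ≤ 1 for all r ∈ ℝ, and A ≤ P B σ_s/(B + C). Let (X, S) be a differentiable solution on [0, ∞) of the spatially homogeneous system with S(0) ∈ [B σ_s/(B + C), B σ_s/(B - C h_*)] and X(0) ≥ 1. Then X(t) ≥ X(0) + (P B σ_s/(B + C) - A) · t for every t ≥ 0; in particular X(t) ≥ 1 for all t ≥ 0, and if A < P B σ_s/(B + C) then X(t) → ∞ as t → ∞. -/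
open Set Filter Real

/-- for the spatially homogeneous system, if `B - C h_* > 0`,
`-h_* ≤ h ≤ 1`, `A ≤ P B σ_s/(B+C)`, `S(0)` lies in the strip
`[B σ_s/(B+C), B σ_s/(B - C h_*)]` and `X(0) ≥ 1`, then
`X(t) ≥ X(0) + (P B σ_s/(B+C) - A) t` for all `t ≥ 0`; in particular `X(t) ≥ 1`
for all `t ≥ 0`, and if `A < P B σ_s/(B+C)` then `X(t) → ∞`. -/
theorem stmt_18 (A B C P σs hstar φstar : ℝ)
    (hA : 0 < A) (hB : 0 < B) (hC : 0 < C) (hP : 0 < P) (hσ : 0 < σs)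
    (hstar_nn : 0 ≤ hstar) (hφ : φstar ≤ -1)
    (h : ℝ → ℝ) (hcont : Continuous h) (hmono : Monotone h)
    (hm1 : h (-1) = 0) (hone : ∀ r : ℝ, 1 ≤ r → h r = 1)
    (hlow : ∀ r : ℝ, r ≤ φstar → h r = -hstar)
    (hBC : 0 < B - C * hstar)
    (hbound : ∀ r : ℝ, -hstar ≤ h r ∧ h r ≤ 1)
    (hAsmall : A ≤ P * B * σs / (B + C))
    (X S : ℝ → ℝ)
    (hXd : ∀ t : ℝ, 0 ≤ t → HasDerivAt X ((P * S t - A) * h (X t)) t)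
    (hSd : ∀ t : ℝ, 0 ≤ t → HasDerivAt S (-C * S t * h (X t) - B * (S t - σs)) t)
    (hS0 : S 0 ∈ Set.Icc (B * σs / (B + C)) (B * σs / (B - C * hstar)))
    (hX0 : 1 ≤ X 0) :
    (∀ t : ℝ, 0 ≤ t → X 0 + (P * B * σs / (B + C) - A) * t ≤ X t) ∧
    (∀ t : ℝ, 0 ≤ t → 1 ≤ X t) ∧
    (A < P * B * σs / (B + C) → Filter.Tendsto X Filter.atTop Filter.atTop) := by
  have hBCpos : (0:ℝ) < B + C := by linarith
  set σstar : ℝ := B * σs / (B + C) with hσstar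
  have hσstar_pos : 0 < σstar := by positivity
  have hSc : ∀ t : ℝ, 0 ≤ t → ContinuousAt S t := fun t ht => (hSd t ht).continuousAt
  have hXc : ∀ t : ℝ, 0 ≤ t → ContinuousAt X t := fun t ht => (hXd t ht).continuousAt
  have hS0low : σstar ≤ S 0 := hS0.1
  -- Step 1: S stays positive
  have hSpos : ∀ t : ℝ, 0 ≤ t → 0 < S t := by
    by_contra hcon
    push_neg at hcon
    obtain ⟨t0, ht0, hSt0⟩ := hcon
    set Bad : Set ℝ := {t : ℝ | 0 ≤ t ∧ S t ≤ 0} with hBadDef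
    have hne : Bad.Nonempty := ⟨t0, ht0, hSt0⟩
    have hbdd : BddBelow Bad := ⟨0, fun t ht => ht.1⟩
    set t1 : ℝ := sInf Bad with ht1def
    have ht1nn : 0 ≤ t1 := le_csInf hne fun t ht => ht.1
    have hnotBad : ∀ t : ℝ, t < t1 → t ∉ Bad := fun t htlt hmem =>
      absurd (csInf_le hbdd hmem) (not_le.mpr htlt)
    have hSt1le : S t1 ≤ 0 := by
      obtain ⟨u, -, hu_tend, hu_mem⟩ := exists_seq_tendsto_sInf hne hbdd
      exact le_of_tendsto ((hSc t1 ht1nn).tendsto.comp hu_tend) (Filter.Eventually.of_forall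
        fun n => (hu_mem n).2)
    have ht1pos : 0 < t1 := by
      rcases ht1nn.lt_or_eq with hlt | heq
      · exact hlt
      · exfalso; rw [← heq] at hSt1le; linarith
    have hSt1ge : 0 ≤ S t1 := by
      have htends : Filter.Tendsto S (nhdsWithin t1 (Iio t1)) (nhds (S t1)) :=
        (hSc t1 ht1nn).continuousWithinAt.tendsto
      have hev : ∀ᶠ t in nhdsWithin t1 (Iio t1), 0 ≤ S t := by
        filter_upwards [Ioo_mem_nhdsLT_of_mem (⟨ht1pos, le_refl t1⟩ : t1 ∈ Set.Ioc 0 t1)]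
          with t ht
        by_contra hneg
        exact hnotBad t ht.2 ⟨le_of_lt ht.1, le_of_lt (not_le.mp hneg)⟩
      exact ge_of_tendsto htends hev
    have hSt1 : S t1 = 0 := le_antisymm hSt1le hSt1ge
    have hd : HasDerivAt S (B * σs) t1 := by
      have := hSd t1 ht1nn
      rw [hSt1] at this
      simpa using this
    have hslope := hasDerivAt_iff_tendsto_slope.mp hd
    have hevpos : ∀ᶠ x in nhdsWithin t1 {t1}ᶜ, 0 < slope S t1 x :=
      hslope.eventually (eventually_gt_nhds (by positivity))
    have hsub : nhdsWithin t1 (Iio t1) ≤ nhdsWithin t1 {t1}ᶜ :=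
      nhdsWithin_mono t1 (fun x hx => ne_of_lt hx)
    have hev2 : ∀ᶠ x in nhdsWithin t1 (Iio t1),
        0 < slope S t1 x ∧ x ∈ Set.Ioo 0 t1 := by
      filter_upwards [hevpos.filter_mono hsub,
        Ioo_mem_nhdsLT_of_mem (⟨ht1pos, le_refl t1⟩ : t1 ∈ Set.Ioc 0 t1)] with x h1 h2
      exact ⟨h1, h2⟩
    obtain ⟨x, hx1, hx2⟩ := hev2.exists
    have hxne : x - t1 < 0 := by linarith [hx2.2]
    have hSx : 0 < S x := by
      by_contra hneg
      exact hnotBad x hx2.2 ⟨le_of_lt hx2.1, not_lt.mp hneg⟩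
    have : slope S t1 x = (S x - S t1) / (x - t1) := by
      simp [slope_def_field]
    rw [this, hSt1, sub_zero] at hx1
    rcases div_pos_iff.mp hx1 with ⟨h1, h2⟩ | ⟨h1, h2⟩
    · linarith
    · linarith
  -- Step 2: S stays above σstar
  have hkey : (B + C) * σstar = B * σs := by
    rw [hσstar]; field_simp
  have hSlow : ∀ t : ℝ, 0 ≤ t → σstar ≤ S t := by
    intro t ht
    set f : ℝ → ℝ := fun t => (S t - σstar) * Real.exp ((B + C) * t) with hfdef
    have hfd : ∀ s : ℝ, 0 ≤ s → HasDerivAt f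
        ((-C * S s * h (X s) - B * (S s - σs)) * Real.exp ((B + C) * s)
          + (S s - σstar) * ((B + C) * Real.exp ((B + C) * s))) s := by
      intro s hs
      have h1 := (hSd s hs).sub_const σstar
      have h2 : HasDerivAt (fun u : ℝ => Real.exp ((B + C) * u))
          ((B + C) * Real.exp ((B + C) * s)) s := by
        have h2' := ((hasDerivAt_id s).const_mul (B + C)).exp
        simp only [id_eq, mul_one] at h2'
        rw [mul_comm]
        exact h2'
      exact h1.mul h2
    have hfmono : MonotoneOn f (Set.Ici 0) := by
      apply monotoneOn_of_deriv_nonneg (convex_Ici 0)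
      · exact fun s hs => ((hfd s hs).continuousAt).continuousWithinAt
      · intro s hs
        rw [interior_Ici] at hs
        exact ((hfd s (le_of_lt hs)).differentiableAt).differentiableWithinAt
      · intro s hs
        rw [interior_Ici] at hs
        rw [(hfd s (le_of_lt hs)).deriv]
        have hexp : 0 < Real.exp ((B + C) * s) := Real.exp_pos _
        have hS : 0 < S s := hSpos s (le_of_lt hs)
        have hh : h (X s) ≤ 1 := (hbound (X s)).2
        nlinarith [mul_pos hC hS, mul_nonneg (mul_pos hC hS).le (sub_nonneg.mpr hh)]
    have hf0 : 0 ≤ f 0 := by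
      simp only [hfdef, mul_zero, Real.exp_zero, mul_one]
      linarith
    have := hfmono (Set.self_mem_Ici) (Set.mem_Ici.mpr ht) ht
    have hexp : 0 < Real.exp ((B + C) * t) := Real.exp_pos _
    have hft : 0 ≤ (S t - σstar) * Real.exp ((B + C) * t) := le_trans hf0 this
    nlinarith
  -- P S - A nonneg
  have hPσ : P * σstar = P * B * σs / (B + C) := by rw [hσstar]; ring
  have hPS : ∀ t : ℝ, 0 ≤ t → 0 ≤ P * S t - A := by
    intro t ht
    have : P * σstar ≤ P * S t := by
      exact mul_le_mul_of_nonneg_left (hSlow t ht) hP.le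
    rw [hPσ] at this
    linarith
  -- Step 3: X stays positive
  have hXpos : ∀ t : ℝ, 0 ≤ t → 0 < X t := by
    by_contra hcon
    push_neg at hcon
    obtain ⟨t0, ht0, hXt0⟩ := hcon
    set Bad : Set ℝ := {t : ℝ | 0 ≤ t ∧ X t ≤ 0} with hBadDef
    have hne : Bad.Nonempty := ⟨t0, ht0, hXt0⟩
    have hbdd : BddBelow Bad := ⟨0, fun t ht => ht.1⟩
    set t1 : ℝ := sInf Bad with ht1def
    have ht1nn : 0 ≤ t1 := le_csInf hne fun t ht => ht.1
    have hnotBad : ∀ t : ℝ, t < t1 → t ∉ Bad := fun t htlt hmem =>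
      absurd (csInf_le hbdd hmem) (not_le.mpr htlt)
    have hXt1le : X t1 ≤ 0 := by
      obtain ⟨u, -, hu_tend, hu_mem⟩ := exists_seq_tendsto_sInf hne hbdd
      exact le_of_tendsto ((hXc t1 ht1nn).tendsto.comp hu_tend) (Filter.Eventually.of_forall
        fun n => (hu_mem n).2)
    have ht1pos : 0 < t1 := by
      rcases ht1nn.lt_or_eq with hlt | heq
      · exact hlt
      · exfalso; rw [← heq] at hXt1le; linarith
    have hXmono : MonotoneOn X (Set.Icc 0 t1) := by
      apply monotoneOn_of_deriv_nonneg (convex_Icc 0 t1)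
      · exact fun s hs => ((hXd s hs.1).continuousAt).continuousWithinAt
      · intro s hs
        rw [interior_Icc] at hs
        exact ((hXd s (le_of_lt hs.1)).differentiableAt).differentiableWithinAt
      · intro s hs
        rw [interior_Icc] at hs
        rw [(hXd s (le_of_lt hs.1)).deriv]
        have hXs : 0 < X s := by
          by_contra hneg
          exact hnotBad s hs.2 ⟨le_of_lt hs.1, not_lt.mp hneg⟩
        have hh : 0 ≤ h (X s) := by
          rw [← hm1]
          exact hmono (by linarith)
        exact mul_nonneg (hPS s (le_of_lt hs.1)) hh
    have := hXmono (Set.left_mem_Icc.mpr ht1nn) (Set.right_mem_Icc.mpr ht1nn) ht1nn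
    linarith
  -- Step 4: X is monotone on [0,∞), hence ≥ 1
  have hXmono : MonotoneOn X (Set.Ici 0) := by
    apply monotoneOn_of_deriv_nonneg (convex_Ici 0)
    · exact fun s hs => ((hXd s hs).continuousAt).continuousWithinAt
    · intro s hs
      rw [interior_Ici] at hs
      exact ((hXd s (le_of_lt hs)).differentiableAt).differentiableWithinAt
    · intro s hs
      rw [interior_Ici] at hs
      rw [(hXd s (le_of_lt hs)).deriv]
      have hXs : 0 < X s := hXpos s (le_of_lt hs)
      have hh : 0 ≤ h (X s) := by
        rw [← hm1]
        exact hmono (by linarith)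
      exact mul_nonneg (hPS s (le_of_lt hs)) hh
  have hX1 : ∀ t : ℝ, 0 ≤ t → 1 ≤ X t := by
    intro t ht
    exact le_trans hX0 (hXmono Set.self_mem_Ici (Set.mem_Ici.mpr ht) ht)
  -- Step 5: linear lower bound
  set c : ℝ := P * B * σs / (B + C) - A with hcdef
  have hcnn : 0 ≤ c := by rw [hcdef]; linarith
  have hmain : ∀ t : ℝ, 0 ≤ t → X 0 + c * t ≤ X t := by
    intro t ht
    set u : ℝ → ℝ := fun s => X s - c * s with hudef
    have hud : ∀ s : ℝ, 0 ≤ s →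
        HasDerivAt u ((P * S s - A) * h (X s) - c) s := by
      intro s hs
      have h2 : HasDerivAt (fun r : ℝ => c * r) c s := by
        simpa using (hasDerivAt_id s).const_mul c
      exact (hXd s hs).sub h2
    have humono : MonotoneOn u (Set.Ici 0) := by
      apply monotoneOn_of_deriv_nonneg (convex_Ici 0)
      · exact fun s hs => ((hud s hs).continuousAt).continuousWithinAt
      · intro s hs
        rw [interior_Ici] at hs
        exact ((hud s (le_of_lt hs)).differentiableAt).differentiableWithinAt
      · intro s hs
        rw [interior_Ici] at hs
        rw [(hud s (le_of_lt hs)).deriv]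
        have hX1' : 1 ≤ X s := hX1 s (le_of_lt hs)
        rw [hone (X s) hX1', mul_one]
        have : P * σstar ≤ P * S s :=
          mul_le_mul_of_nonneg_left (hSlow s (le_of_lt hs)) hP.le
        rw [hPσ] at this
        rw [hcdef]
        linarith
    have := humono Set.self_mem_Ici (Set.mem_Ici.mpr ht) ht
    simp only [hudef, mul_zero, sub_zero] at this
    linarith
  refine ⟨hmain, hX1, fun hAlt => ?_⟩
  have hcpos : 0 < c := by rw [hcdef]; linarith
  have htend : Filter.Tendsto (fun t : ℝ => X 0 + c * t) Filter.atTop Filter.atTop := by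
    apply Filter.tendsto_atTop_add_const_left
    exact Filter.Tendsto.const_mul_atTop hcpos Filter.tendsto_id
  apply Filter.tendsto_atTop_mono' _ _ htend
  filter_upwards [Filter.eventually_ge_atTop (0:ℝ)] with t ht
  exact hmain t ht
end

section
/- Suppose B - C h_* > 0, -h_* ≤ h(r) ≤ 1 for all r ∈ ℝ, and δ := A - P B σ_s/(B - C h_*) > 0. Let (X, S) be a differentiable solution on [0, ∞) of the spatially homogeneous system with S(0) ∈ [B σ_s/(B + C), B σ_s/(B - C h_*)] and X(0) ≥ 1. Then there exists a time t* with 0 ≤ t* ≤ (X(0) - 1)/δ such that X(t*) ≤ 1. -/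
/-! The nutrient `S` can never cross the level `M = B σ_s / (B - C h_*)` upwards: above `M` its
drift is at most `-(B - C h_*) (S - M) ≤ 0`. Hence `S ≤ M` for all times, and as long as `X > 1`
we have `h(X) = 1` and `X' = P S - A ≤ P M - A = -δ`, so `X` drops from `X(0)` to `1` within
time `(X(0) - 1)/δ`. -/

open Set Real

theorem image_le_of_deriv_right_nonpos_above {f f' : ℝ → ℝ} {a b M : ℝ}
    (hf : ContinuousOn f (Icc a b))
    (hf' : ∀ x ∈ Ico a b, HasDerivWithinAt f (f' x) (Ici x) x)
    (ha : f a ≤ M) (hdecr : ∀ x ∈ Ico a b, M < f x → f' x ≤ 0) :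
    ∀ x ∈ Icc a b, f x ≤ M := by
  intro x hx
  refine le_of_forall_pos_le_add fun ε hε => ?_
  -- the barrier `M + ε e^(y - x)` is strictly increasing and equals `M + ε` at `y = x`
  have hbarrier : ∀ y, HasDerivAt (fun y => M + ε * exp (y - x)) (ε * exp (y - x)) y := fun y => by
    simpa using (((hasDerivAt_id y).sub_const x).exp.const_mul ε).const_add M
  have hfence := image_le_of_deriv_right_lt_deriv_boundary hf hf'
    (B := fun y => M + ε * exp (y - x))
    (ha.trans (le_add_of_nonneg_right (by positivity))) hbarrier
    (fun y hy hfy => (hdecr y hy (hfy ▸ lt_add_of_pos_right M (by positivity))).trans_lt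
      (by positivity))
  simpa using hfence hx

theorem nutrient_drift_nonpos {B C σs hstar η s : ℝ} (hC : 0 ≤ C) (hBC : 0 < B - C * hstar)
    (hη : -hstar ≤ η) (hs₀ : 0 ≤ s) (hs : B * σs / (B - C * hstar) ≤ s) :
    -C * s * η - B * (s - σs) ≤ 0 := by
  have hforcing : -C * s * η ≤ C * hstar * s := by nlinarith [mul_nonneg hC hs₀]
  have hlevel : B * σs ≤ (B - C * hstar) * s := by rwa [div_le_iff₀' hBC] at hs
  linarith

theorem nutrient_le_of_initial_le {B C σs hstar : ℝ} {η S : ℝ → ℝ} (hC : 0 ≤ C) (hBσ : 0 ≤ B * σs)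
    (hBC : 0 < B - C * hstar) (hη : ∀ t, -hstar ≤ η t)
    (hSd : ∀ t, 0 ≤ t → HasDerivAt S (-C * S t * η t - B * (S t - σs)) t)
    (hS0 : S 0 ≤ B * σs / (B - C * hstar)) :
    ∀ t, 0 ≤ t → S t ≤ B * σs / (B - C * hstar) := by
  intro t ht
  have hM : 0 ≤ B * σs / (B - C * hstar) := div_nonneg hBσ hBC.le
  exact image_le_of_deriv_right_nonpos_above
    (fun x hx => (hSd x hx.1).continuousAt.continuousWithinAt)
    (fun x hx => (hSd x hx.1).hasDerivWithinAt) hS0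
    (fun x _ hx => nutrient_drift_nonpos hC hBC (hη x) (hM.trans hx.le) hx.le) t ⟨ht, le_rfl⟩

theorem exists_le_of_hasDerivAt_le_neg {f f' : ℝ → ℝ} {a c δ : ℝ} (hδ : 0 < δ)
    (hf : ∀ x, a ≤ x → HasDerivAt f (f' x) x) (hfa : c ≤ f a)
    (hdecr : ∀ x, a ≤ x → c < f x → f' x ≤ -δ) :
    ∃ t, a ≤ t ∧ t - a ≤ (f a - c) / δ ∧ f t ≤ c := by
  set T := a + (f a - c) / δ
  have haT : a ≤ T := le_add_of_nonneg_right (div_nonneg (sub_nonneg.2 hfa) hδ.le)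
  by_contra! habove
  have habove' : ∀ x ∈ Icc a T, c < f x := fun x hx =>
    habove x hx.1 (by linarith [hx.2])
  have hline : ∀ x, HasDerivAt (fun x => f a - δ * (x - a)) (-δ) x := fun x => by
    simpa using ((hasDerivAt_id x).sub_const a).const_mul δ |>.const_sub (f a)
  have hfT := image_le_of_deriv_right_le_deriv_boundary
    (fun x hx => (hf x hx.1).continuousAt.continuousWithinAt)
    (fun x hx => (hf x hx.1).hasDerivWithinAt) (by simp)
    (fun x _ => (hline x).continuousAt.continuousWithinAt)
    (fun x _ => (hline x).hasDerivWithinAt)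
    (fun x hx => hdecr x hx.1 (habove' x (Ico_subset_Icc_self hx))) ⟨haT, le_rfl⟩
  have hδT : δ * (T - a) = f a - c := by simp only [T, add_sub_cancel_left]; field_simp
  linarith [habove' T ⟨haT, le_rfl⟩]

theorem stmt_19_general (A B C P σs hstar : ℝ)
    (hB : 0 < B) (hC : 0 < C) (hP : 0 < P) (hσ : 0 < σs)
    (h : ℝ → ℝ)
    (hone : ∀ r : ℝ, 1 ≤ r → h r = 1)
    (hBC : 0 < B - C * hstar)
    (hbound : ∀ r : ℝ, -hstar ≤ h r ∧ h r ≤ 1)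
    (hδ : 0 < A - P * B * σs / (B - C * hstar))
    (X S : ℝ → ℝ)
    (hXd : ∀ t : ℝ, 0 ≤ t → HasDerivAt X ((P * S t - A) * h (X t)) t)
    (hSd : ∀ t : ℝ, 0 ≤ t → HasDerivAt S (-C * S t * h (X t) - B * (S t - σs)) t)
    (hS0 : S 0 ∈ Set.Icc (B * σs / (B + C)) (B * σs / (B - C * hstar)))
    (hX0 : 1 ≤ X 0) :
    ∃ tstar : ℝ, 0 ≤ tstar ∧
      tstar ≤ (X 0 - 1) / (A - P * B * σs / (B - C * hstar)) ∧
      X tstar ≤ 1 := by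
  have hS : ∀ t, 0 ≤ t → S t ≤ B * σs / (B - C * hstar) :=
    nutrient_le_of_initial_le hC.le (mul_pos hB hσ).le hBC (fun t => (hbound (X t)).1) hSd hS0.2
  have hXdecr : ∀ t, 0 ≤ t → 1 < X t →
      (P * S t - A) * h (X t) ≤ -(A - P * B * σs / (B - C * hstar)) := by
    intro t ht hXt
    have hPS := mul_le_mul_of_nonneg_left (hS t ht) hP.le
    have hPM : P * B * σs / (B - C * hstar) = P * (B * σs / (B - C * hstar)) := by ring
    rw [hone _ hXt.le, hPM]
    linarith
  obtain ⟨t, ht, htT, hXt⟩ := exists_le_of_hasDerivAt_le_neg hδ hXd hX0 hXdecr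
  exact ⟨t, ht, by simpa using htT, hXt⟩

/-- for the spatially homogeneous system, if `B - C h_* > 0`,
`-h_* ≤ h ≤ 1`, `δ := A - P B σ_s/(B - C h_*) > 0`, `S(0)` lies in the strip
`[B σ_s/(B+C), B σ_s/(B - C h_*)]` and `X(0) ≥ 1`, then there is a time `t*` with
`0 ≤ t* ≤ (X(0) - 1)/δ` and `X(t*) ≤ 1`. -/
theorem stmt_19 (A B C P σs hstar φstar : ℝ)
    (hA : 0 < A) (hB : 0 < B) (hC : 0 < C) (hP : 0 < P) (hσ : 0 < σs)
    (hstar_nn : 0 ≤ hstar) (hφ : φstar ≤ -1)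
    (h : ℝ → ℝ) (hcont : Continuous h) (hmono : Monotone h)
    (hm1 : h (-1) = 0) (hone : ∀ r : ℝ, 1 ≤ r → h r = 1)
    (hlow : ∀ r : ℝ, r ≤ φstar → h r = -hstar)
    (hBC : 0 < B - C * hstar)
    (hbound : ∀ r : ℝ, -hstar ≤ h r ∧ h r ≤ 1)
    (hδ : 0 < A - P * B * σs / (B - C * hstar))
    (X S : ℝ → ℝ)
    (hXd : ∀ t : ℝ, 0 ≤ t → HasDerivAt X ((P * S t - A) * h (X t)) t)
    (hSd : ∀ t : ℝ, 0 ≤ t → HasDerivAt S (-C * S t * h (X t) - B * (S t - σs)) t)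
    (hS0 : S 0 ∈ Set.Icc (B * σs / (B + C)) (B * σs / (B - C * hstar)))
    (hX0 : 1 ≤ X 0) :
    ∃ tstar : ℝ, 0 ≤ tstar ∧
      tstar ≤ (X 0 - 1) / (A - P * B * σs / (B - C * hstar)) ∧
      X tstar ≤ 1 :=
  stmt_19_general A B C P σs hstar hB hC hP hσ h hone hBC hbound hδ X S hXd hSd hS0 hX0
end
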